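/- arXiv:2503.16258 — 9 statements merged into one kernel-verified Lean document; each statement's English description precedes it below -/
import Mathlib

section
/- (Time-shift property of the AQWD.) Let f ∈ L²(ℝ) and t₀ ∈ ℝ, and let g(t) = f(t − t₀). Then for all t, ν ∈ ℝ: QW_g^Λ(t,ν) = e^{i(C−A)(2t−t₀)t₀} · e^{i[2ν + ((A+C)/B)t₀]·((C²−A²)/B)·t₀} · e^{i(E−D)[(A+C)/B + 1]t₀} · QW_f^Λ(t − t₀, ν + ((A+C)/B)t₀). -/
open MeasureTheory Complex Real

noncomputable def chirp (f : ℝ → ℂ) (p q : ℝ) : ℝ → ℂ :=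
  fun t => f t * Complex.exp (Complex.I * ((p * t ^ 2 + q * t : ℝ) : ℂ))

noncomputable def AQWD (A B C D E : ℝ) (f : ℝ → ℂ) (t ν : ℝ) : ℂ :=
  (|B| : ℝ) * Complex.exp (Complex.I * (((A - C) * ν ^ 2 + (D - E) * ν : ℝ) : ℂ)) *
    ∫ Υ : ℝ, chirp f C E (t + Υ / 2) * (starRingEnd ℂ) (chirp f A D (t - Υ / 2)) *
      Complex.exp (Complex.I * ((B * ν * Υ : ℝ) : ℂ))

noncomputable def AQAF (A B C D E : ℝ) (f : ℝ → ℂ) (Υ ν : ℝ) : ℂ :=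
  (|B| : ℝ) * Complex.exp (Complex.I * (((A - C) * ν ^ 2 + (D - E) * ν : ℝ) : ℂ)) *
    ∫ t : ℝ, chirp f C E (t + Υ / 2) * (starRingEnd ℂ) (chirp f A D (t - Υ / 2)) *
      Complex.exp (Complex.I * ((B * ν * t : ℝ) : ℂ))

lemma conj_exp_I_mul (r : ℝ) :
    (starRingEnd ℂ) (Complex.exp (Complex.I * (r : ℂ))) =
      Complex.exp (Complex.I * ((-r : ℝ) : ℂ)) := by
  rw [← Complex.exp_conj, map_mul, Complex.conj_I, Complex.conj_ofReal]
  push_cast; ring_nf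

lemma exp_combine (u v : ℂ) (a b c : ℂ) :
    u * Complex.exp a * (v * Complex.exp b) * Complex.exp c =
      u * v * Complex.exp (a + b + c) := by
  rw [Complex.exp_add, Complex.exp_add]; ring

theorem AQWD_time_shift (A B C D E : ℝ) (hB : B ≠ 0)
    (f : ℝ → ℂ) (hf : MemLp f 2 volume) (t₀ t ν : ℝ) :
    AQWD A B C D E (fun s => f (s - t₀)) t ν =
      Complex.exp (Complex.I * (((C - A) * (2 * t - t₀) * t₀ : ℝ) : ℂ)) *
      Complex.exp (Complex.I * (((2 * ν + (A + C) / B * t₀) * ((C ^ 2 - A ^ 2) / B) * t₀ : ℝ) : ℂ)) *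
      Complex.exp (Complex.I * (((E - D) * ((A + C) / B + 1) * t₀ : ℝ) : ℂ)) *
      AQWD A B C D E f (t - t₀) (ν + (A + C) / B * t₀) := by
  unfold AQWD chirp
  set ν' : ℝ := ν + (A + C) / B * t₀ with hν'
  have hint :
      (∫ Υ : ℝ, f (t + Υ / 2 - t₀) *
            Complex.exp (Complex.I * ((C * (t + Υ / 2) ^ 2 + E * (t + Υ / 2) : ℝ) : ℂ)) *
          (starRingEnd ℂ) (f (t - Υ / 2 - t₀) *
            Complex.exp (Complex.I * ((A * (t - Υ / 2) ^ 2 + D * (t - Υ / 2) : ℝ) : ℂ))) *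
          Complex.exp (Complex.I * ((B * ν * Υ : ℝ) : ℂ))) =
      Complex.exp (Complex.I * (((C - A) * (2 * t - t₀) * t₀ + (E - D) * t₀ : ℝ) : ℂ)) *
      ∫ Υ : ℝ, f (t - t₀ + Υ / 2) *
            Complex.exp (Complex.I * ((C * (t - t₀ + Υ / 2) ^ 2 + E * (t - t₀ + Υ / 2) : ℝ) : ℂ)) *
          (starRingEnd ℂ) (f (t - t₀ - Υ / 2) *
            Complex.exp (Complex.I * ((A * (t - t₀ - Υ / 2) ^ 2 + D * (t - t₀ - Υ / 2) : ℝ) : ℂ))) *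
          Complex.exp (Complex.I * ((B * ν' * Υ : ℝ) : ℂ)) := by
    rw [← integral_const_mul]
    apply integral_congr_ae
    filter_upwards with Υ
    rw [show t + Υ / 2 - t₀ = t - t₀ + Υ / 2 by ring,
        show t - Υ / 2 - t₀ = t - t₀ - Υ / 2 by ring]
    rw [map_mul, map_mul, conj_exp_I_mul, conj_exp_I_mul, ← mul_assoc, ← mul_assoc]
    rw [mul_assoc (f (t - t₀ + Υ / 2)) _ ((starRingEnd ℂ) (f (t - t₀ - Υ / 2))),
        mul_comm (Complex.exp _) ((starRingEnd ℂ) (f (t - t₀ - Υ / 2))), ← mul_assoc]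
    have h2 : ∀ (u v a b c : ℂ),
        u * v * Complex.exp a * Complex.exp b * Complex.exp c =
          u * v * Complex.exp (a + b + c) := by
      intros; rw [Complex.exp_add, Complex.exp_add]; ring
    have h3 : ∀ (d u a v b c : ℂ),
        Complex.exp d * (u * Complex.exp a * (v * Complex.exp b)) * Complex.exp c =
          u * v * Complex.exp (d + a + b + c) := by
      intros; rw [Complex.exp_add, Complex.exp_add, Complex.exp_add]; ring
    rw [h2, h3]
    congr 2
    rw [hν']
    push_cast
    have hBC : (B : ℂ) ≠ 0 := Complex.ofReal_ne_zero.mpr hB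
    field_simp
    ring
  rw [hint]
  have hBC : (B : ℂ) ≠ 0 := Complex.ofReal_ne_zero.mpr hB
  conv_lhs => rw [show ∀ x y z w : ℂ, x * y * (z * w) = x * y * z * w from
    fun _ _ _ _ => by ring]
  conv_rhs => rw [show ∀ x y z u v w : ℂ, x * y * z * (u * v * w) = x * y * z * (u * v) * w from
    fun _ _ _ _ _ _ => by ring]
  congr 1
  rw [mul_assoc, ← Complex.exp_add,
      show ∀ a b c x d : ℂ, Complex.exp a * Complex.exp b * Complex.exp c * (x * Complex.exp d)
        = x * Complex.exp (a + b + c + d) from fun _ _ _ _ _ => by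
          rw [Complex.exp_add, Complex.exp_add, Complex.exp_add]; ring]
  congr 2
  rw [hν']
  push_cast
  field_simp
  ring
end

section
/- (Time-shift property of the AQAF.) Let f ∈ L²(ℝ) and t₀ ∈ ℝ, and let g(t) = f(t − t₀). Then for all Υ, ν ∈ ℝ: QA_g^Λ(Υ,ν) = exp(i[(C−A)t₀² + (A+C)t₀Υ + (E−D)t₀ + Bνt₀ + (4(C−A)²t₀/B)·(ν + ((C−A)/B)t₀) + 2(E−D)(C−A)t₀/B]) · QA_f^Λ(Υ, ν + (2(C−A)/B)t₀). -/
open MeasureTheory Complex Real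

private lemma conj_exp_I_real (r : ℝ) :
    (starRingEnd ℂ) (Complex.exp (Complex.I * (r : ℂ))) =
      Complex.exp (-(Complex.I * (r : ℂ))) := by
  rw [← Complex.exp_conj, map_mul, Complex.conj_I, Complex.conj_ofReal, neg_mul]

private lemma exp_shuffle (a b z w u zk z' w' u' : ℂ)
    (h : z + w + u = zk + (z' + w' + u')) :
    a * Complex.exp z * (b * Complex.exp w) * Complex.exp u =
      Complex.exp zk * (a * Complex.exp z' * (b * Complex.exp w') * Complex.exp u') := by
  have h1 : a * Complex.exp z * (b * Complex.exp w) * Complex.exp u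
      = a * b * Complex.exp (z + w + u) := by
    rw [Complex.exp_add, Complex.exp_add]; ring
  have h2 : Complex.exp zk * (a * Complex.exp z' * (b * Complex.exp w') * Complex.exp u')
      = a * b * Complex.exp (zk + (z' + w' + u')) := by
    rw [Complex.exp_add, Complex.exp_add, Complex.exp_add]; ring
  rw [h1, h2, h]

theorem AQAF_time_shift (A B C D E : ℝ) (hB : B ≠ 0)
    (f : ℝ → ℂ) (hf : MemLp f 2 volume) (t₀ Υ ν : ℝ) :
    AQAF A B C D E (fun s => f (s - t₀)) Υ ν =
      Complex.exp (Complex.I * (((C - A) * t₀ ^ 2 + (A + C) * t₀ * Υ + (E - D) * t₀ + B * ν * t₀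
        + (4 * (C - A) ^ 2 * t₀ / B) * (ν + (C - A) / B * t₀)
        + 2 * (E - D) * (C - A) * t₀ / B : ℝ) : ℂ)) *
      AQAF A B C D E f Υ (ν + 2 * (C - A) / B * t₀) := by
  unfold AQAF
  set ν' : ℝ := ν + 2 * (C - A) / B * t₀ with hν'
  set K : ℝ := (C - A) * t₀ ^ 2 + (A + C) * t₀ * Υ + (E - D) * t₀ + B * ν * t₀ with hKdef
  have hI : (∫ t : ℝ, chirp (fun s => f (s - t₀)) C E (t + Υ / 2) *
        (starRingEnd ℂ) (chirp (fun s => f (s - t₀)) A D (t - Υ / 2)) *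
        Complex.exp (Complex.I * ((B * ν * t : ℝ) : ℂ)))
      = Complex.exp (Complex.I * (K : ℂ)) *
        ∫ t : ℝ, chirp f C E (t + Υ / 2) * (starRingEnd ℂ) (chirp f A D (t - Υ / 2)) *
        Complex.exp (Complex.I * ((B * ν' * t : ℝ) : ℂ)) := by
    calc (∫ t : ℝ, chirp (fun s => f (s - t₀)) C E (t + Υ / 2) *
            (starRingEnd ℂ) (chirp (fun s => f (s - t₀)) A D (t - Υ / 2)) *
            Complex.exp (Complex.I * ((B * ν * t : ℝ) : ℂ)))
        = ∫ t : ℝ, chirp (fun s => f (s - t₀)) C E ((t + t₀) + Υ / 2) *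
            (starRingEnd ℂ) (chirp (fun s => f (s - t₀)) A D ((t + t₀) - Υ / 2)) *
            Complex.exp (Complex.I * ((B * ν * (t + t₀) : ℝ) : ℂ)) :=
          (integral_add_right_eq_self (fun t : ℝ => chirp (fun s => f (s - t₀)) C E (t + Υ / 2) *
            (starRingEnd ℂ) (chirp (fun s => f (s - t₀)) A D (t - Υ / 2)) *
            Complex.exp (Complex.I * ((B * ν * t : ℝ) : ℂ))) t₀).symm
      _ = ∫ t : ℝ, Complex.exp (Complex.I * (K : ℂ)) *
            (chirp f C E (t + Υ / 2) * (starRingEnd ℂ) (chirp f A D (t - Υ / 2)) *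
            Complex.exp (Complex.I * ((B * ν' * t : ℝ) : ℂ))) := by
          refine integral_congr_ae (Filter.Eventually.of_forall fun t => ?_)
          simp only [chirp]
          rw [show (t + t₀ + Υ / 2) - t₀ = t + Υ / 2 from by ring,
              show (t + t₀ - Υ / 2) - t₀ = t - Υ / 2 from by ring,
              map_mul, map_mul, conj_exp_I_real, conj_exp_I_real]
          refine exp_shuffle _ _ _ _ _ _ _ _ _ ?_
          have h1 : Complex.I * ((C * (t + t₀ + Υ / 2) ^ 2 + E * (t + t₀ + Υ / 2) : ℝ) : ℂ)
              + -(Complex.I * ((A * (t + t₀ - Υ / 2) ^ 2 + D * (t + t₀ - Υ / 2) : ℝ) : ℂ))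
              + Complex.I * ((B * ν * (t + t₀) : ℝ) : ℂ)
              = Complex.I * ((C * (t + t₀ + Υ / 2) ^ 2 + E * (t + t₀ + Υ / 2)
                - (A * (t + t₀ - Υ / 2) ^ 2 + D * (t + t₀ - Υ / 2)) + B * ν * (t + t₀) : ℝ) : ℂ) := by
            push_cast; ring
          have h2 : Complex.I * (K : ℂ)
              + (Complex.I * ((C * (t + Υ / 2) ^ 2 + E * (t + Υ / 2) : ℝ) : ℂ)
              + -(Complex.I * ((A * (t - Υ / 2) ^ 2 + D * (t - Υ / 2) : ℝ) : ℂ))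
              + Complex.I * ((B * ν' * t : ℝ) : ℂ))
              = Complex.I * ((K + (C * (t + Υ / 2) ^ 2 + E * (t + Υ / 2)
                - (A * (t - Υ / 2) ^ 2 + D * (t - Υ / 2)) + B * ν' * t) : ℝ) : ℂ) := by
            push_cast; ring
          rw [h1, h2]
          congr 2
          rw [hKdef, hν']
          field_simp
          ring
      _ = Complex.exp (Complex.I * (K : ℂ)) *
            ∫ t : ℝ, chirp f C E (t + Υ / 2) * (starRingEnd ℂ) (chirp f A D (t - Υ / 2)) *
            Complex.exp (Complex.I * ((B * ν' * t : ℝ) : ℂ)) := integral_const_mul _ _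
  rw [hI]
  have hexp2 : Complex.exp (Complex.I * (((A - C) * ν ^ 2 + (D - E) * ν : ℝ) : ℂ)) *
      Complex.exp (Complex.I * (K : ℂ))
      = Complex.exp (Complex.I * ((K + (4 * (C - A) ^ 2 * t₀ / B) * (ν + (C - A) / B * t₀)
        + 2 * (E - D) * (C - A) * t₀ / B : ℝ) : ℂ)) *
        Complex.exp (Complex.I * (((A - C) * ν' ^ 2 + (D - E) * ν' : ℝ) : ℂ)) := by
    rw [← Complex.exp_add, ← Complex.exp_add]
    have h1 : Complex.I * (((A - C) * ν ^ 2 + (D - E) * ν : ℝ) : ℂ) + Complex.I * (K : ℂ)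
        = Complex.I * (((A - C) * ν ^ 2 + (D - E) * ν + K : ℝ) : ℂ) := by push_cast; ring
    have h2 : Complex.I * ((K + (4 * (C - A) ^ 2 * t₀ / B) * (ν + (C - A) / B * t₀)
          + 2 * (E - D) * (C - A) * t₀ / B : ℝ) : ℂ)
        + Complex.I * (((A - C) * ν' ^ 2 + (D - E) * ν' : ℝ) : ℂ)
        = Complex.I * ((K + (4 * (C - A) ^ 2 * t₀ / B) * (ν + (C - A) / B * t₀)
          + 2 * (E - D) * (C - A) * t₀ / B + ((A - C) * ν' ^ 2 + (D - E) * ν') : ℝ) : ℂ) := by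
      push_cast; ring
    have hr : (A - C) * ν ^ 2 + (D - E) * ν + K
        = K + (4 * (C - A) ^ 2 * t₀ / B) * (ν + (C - A) / B * t₀)
          + 2 * (E - D) * (C - A) * t₀ / B + ((A - C) * ν' ^ 2 + (D - E) * ν') := by
      rw [hν', hKdef]; field_simp; ring
    rw [h1, h2, hr]
  linear_combination (((|B| : ℝ) : ℂ) * ∫ t : ℝ, chirp f C E (t + Υ / 2) *
      (starRingEnd ℂ) (chirp f A D (t - Υ / 2)) *
      Complex.exp (Complex.I * ((B * ν' * t : ℝ) : ℂ))) * hexp2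
end

section
/- (Frequency-shift property of the AQWD.) Let f ∈ L²(ℝ) and u₀ ∈ ℝ, and let g(t) = f(t)·e^{iu₀t}. Then for all t, ν ∈ ℝ: QW_g^Λ(t,ν) = e^{i[(C−A)(u₀/B + 2ν)(u₀/B) + (E−D)(u₀/B)]} · QW_f^Λ(t, ν + u₀/B). -/
open MeasureTheory Complex Real

theorem AQWD_frequency_shift (A B C D E : ℝ) (hB : B ≠ 0)
    (f : ℝ → ℂ) (hf : MemLp f 2 volume) (u₀ t ν : ℝ) :
    AQWD A B C D E (fun s => f s * Complex.exp (Complex.I * ((u₀ * s : ℝ) : ℂ))) t ν =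
      Complex.exp (Complex.I * (((C - A) * (u₀ / B + 2 * ν) * (u₀ / B)
        + (E - D) * (u₀ / B) : ℝ) : ℂ)) *
      AQWD A B C D E f t (ν + u₀ / B) := by
  have hu : B * (u₀ / B) = u₀ := by field_simp
  have key : ∀ x : ℝ, (starRingEnd ℂ) (Complex.exp (Complex.I * (x:ℂ)))
      = Complex.exp (-(Complex.I * (x:ℂ))) := by
    intro x; rw [← Complex.exp_conj]; congr 1; simp
  have hI : ∀ Υ : ℝ,
      chirp (fun s => f s * Complex.exp (Complex.I * ((u₀ * s : ℝ):ℂ))) C E (t+Υ/2) *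
        (starRingEnd ℂ) (chirp (fun s => f s * Complex.exp (Complex.I * ((u₀ * s : ℝ):ℂ))) A D (t-Υ/2)) *
        Complex.exp (Complex.I * ((B*ν*Υ : ℝ):ℂ))
      = chirp f C E (t+Υ/2) * (starRingEnd ℂ) (chirp f A D (t-Υ/2)) *
        Complex.exp (Complex.I * ((B*(ν+u₀/B)*Υ : ℝ):ℂ)) := by
    intro Υ
    simp only [chirp, map_mul, key]
    have h1 : Complex.exp (Complex.I * ((B*(ν+u₀/B)*Υ : ℝ):ℂ))
        = Complex.exp (Complex.I * ((B*ν*Υ : ℝ):ℂ)) * Complex.exp (Complex.I * ((u₀*Υ : ℝ):ℂ)) := by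
      rw [← Complex.exp_add]; congr 1; push_cast
      rw [show ((B:ℂ) * (↑ν + ↑u₀ / ↑B) * ↑Υ) = (B*ν*Υ : ℂ) + (B * (u₀/B)) * Υ by push_cast; ring]
      have : ((B:ℂ) * (↑u₀ / ↑B)) = (u₀ : ℂ) := by
        exact_mod_cast hu
      rw [this]; ring
    have h2 : Complex.exp (Complex.I * ((u₀*(t+Υ/2) : ℝ):ℂ)) * Complex.exp (-(Complex.I * ((u₀*(t-Υ/2) : ℝ):ℂ)))
        = Complex.exp (Complex.I * ((u₀*Υ : ℝ):ℂ)) := by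
      rw [← Complex.exp_add]; congr 1; push_cast; ring
    rw [h1, ← h2]; ring
  unfold AQWD
  have hpre : Complex.exp (Complex.I * (((A - C) * ν ^ 2 + (D - E) * ν : ℝ):ℂ))
      = Complex.exp (Complex.I * (((C - A) * (u₀ / B + 2 * ν) * (u₀ / B) + (E - D) * (u₀ / B) : ℝ):ℂ)) *
        Complex.exp (Complex.I * (((A - C) * (ν + u₀ / B) ^ 2 + (D - E) * (ν + u₀ / B) : ℝ):ℂ)) := by
    rw [← Complex.exp_add]; congr 1; push_cast; ring
  simp only [hI, hpre]; ring
end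

section
/- (Time-marginal property of the AQWD.) Let f ∈ L¹(ℝ) ∩ L²(ℝ), and for fixed ν ∈ ℝ assume (t,Υ) ↦ f_{C,E}(t + Υ/2)·conj(f_{A,D}(t − Υ/2)) is integrable on ℝ². Then ∫_ℝ QW_f^Λ(t,ν) dt = |B|·e^{i[(A−C)ν² + (D−E)ν]} · (∫_ℝ f(x)·e^{i(Cx² + Ex + Bνx)} dx) · conj(∫_ℝ f(y)·e^{i(Ay² + Dy + Bνy)} dy); equivalently (for B > 0) it equals 2π·Q_Λ{f}(ν)·conj(Q_{Λ'}{f}(ν)) with Λ' = (C,B,A,E,D), where Q_Λ is the quadratic-phase Fourier transform. -/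
open MeasureTheory Complex Real

/-- Quadratic-phase Fourier transform with the principal branch of the square root. -/
noncomputable def QPFT (A B C D E : ℝ) (f : ℝ → ℂ) (ν : ℝ) : ℂ :=
  (((B : ℂ) / (2 * (Real.pi : ℂ) * Complex.I)) ^ ((1 : ℂ) / 2)) *
    ∫ t : ℝ, f t * Complex.exp (Complex.I *
      ((A * ν ^ 2 + B * t * ν + C * t ^ 2 + D * ν + E * t : ℝ) : ℂ))

lemma norm_expI (r : ℝ) : ‖Complex.exp (Complex.I * (r:ℂ))‖ = 1 := by
  rw [mul_comm]; exact Complex.norm_exp_ofReal_mul_I r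

lemma expI_mul (a b c : ℝ) (h : a + b = c) :
    Complex.exp (Complex.I * (a:ℂ)) * Complex.exp (Complex.I * (b:ℂ))
      = Complex.exp (Complex.I * (c:ℂ)) := by
  rw [← Complex.exp_add, ← h]; push_cast; ring_nf

lemma conj_expI (a : ℝ) :
    (starRingEnd ℂ) (Complex.exp (Complex.I * (a:ℂ)))
      = Complex.exp (Complex.I * ((-a : ℝ):ℂ)) := by
  rw [← Complex.exp_conj]; congr 1
  simp [Complex.conj_ofReal]

lemma contI (P : ℝ → ℝ) (hP : Continuous P) :
    Continuous fun t => Complex.exp (Complex.I * ((P t : ℝ):ℂ)) := by fun_prop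

lemma chirp_integrable {f : ℝ → ℂ} (hf : Integrable f) (p q : ℝ) :
    Integrable (chirp f p q) := by
  have hm : AEStronglyMeasurable
      (fun t : ℝ => Complex.exp (Complex.I * ((p * t ^ 2 + q * t : ℝ):ℂ))) volume :=
    (contI _ (by continuity)).aestronglyMeasurable
  exact (hf.bdd_mul hm (c := 1) (Filter.Eventually.of_forall fun x => le_of_eq (norm_expI _))).congr
    (Filter.Eventually.of_forall fun t => mul_comm _ _)

lemma integrable_conj' {F : ℝ → ℂ} (hF : Integrable F) :
    Integrable (fun y => (starRingEnd ℂ) (F y)) := by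
  refine ⟨RCLike.continuous_conj.comp_aestronglyMeasurable hF.1, ?_⟩
  simpa [HasFiniteIntegral] using hF.2

lemma key_marginal (A B C D E ν : ℝ) (f : ℝ → ℂ) (hfi : Integrable f)
    (hint : Integrable (fun p : ℝ × ℝ =>
      chirp f C E (p.1 + p.2 / 2) * (starRingEnd ℂ) (chirp f A D (p.1 - p.2 / 2)))) :
    (∫ t : ℝ, ∫ Υ : ℝ, chirp f C E (t + Υ / 2) * (starRingEnd ℂ) (chirp f A D (t - Υ / 2)) *
        Complex.exp (Complex.I * ((B * ν * Υ : ℝ) : ℂ))) =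
      (∫ x : ℝ, f x * Complex.exp (Complex.I * ((C * x ^ 2 + E * x + B * ν * x : ℝ) : ℂ))) *
      (starRingEnd ℂ)
        (∫ y : ℝ, f y * Complex.exp (Complex.I * ((A * y ^ 2 + D * y + B * ν * y : ℝ) : ℂ))) := by
  set g : ℝ → ℂ := chirp f C E with hg_def
  set h : ℝ → ℂ := fun y => (starRingEnd ℂ) (chirp f A D y) with hh_def
  have hg : Integrable g := chirp_integrable hfi C E
  have hh : Integrable h := integrable_conj' (chirp_integrable hfi A D)
  have hΦ : Integrable (fun p : ℝ × ℝ => g (p.1 + p.2/2) * h (p.1 - p.2/2) *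
      Complex.exp (Complex.I * ((B * ν * p.2 : ℝ):ℂ))) ((volume : Measure ℝ).prod volume) := by
    rw [← Measure.volume_eq_prod]
    have hm : AEStronglyMeasurable
        (fun p : ℝ × ℝ => Complex.exp (Complex.I * ((B * ν * p.2 : ℝ):ℂ))) volume := by
      apply Continuous.aestronglyMeasurable; fun_prop
    exact (hint.bdd_mul hm (c := 1) (Filter.Eventually.of_forall fun x => le_of_eq (norm_expI _))).congr
      (Filter.Eventually.of_forall fun p => by ring)
  have hW : Integrable (fun p : ℝ × ℝ => g p.2 * h (p.2 - p.1) *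
      Complex.exp (Complex.I * ((B * ν * p.1 : ℝ):ℂ))) ((volume : Measure ℝ).prod volume) := by
    have hbase := hg.convolution_integrand (ContinuousLinearMap.mul ℂ ℂ) hh.comp_neg
    have hm : AEStronglyMeasurable
        (fun p : ℝ × ℝ => Complex.exp (Complex.I * ((B * ν * p.1 : ℝ):ℂ)))
        ((volume : Measure ℝ).prod volume) := by
      apply Continuous.aestronglyMeasurable; fun_prop
    refine (hbase.bdd_mul hm (c := 1) (Filter.Eventually.of_forall fun x => le_of_eq (norm_expI _))).congr
      (Filter.Eventually.of_forall fun p => ?_)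
    simp only [ContinuousLinearMap.mul_apply', neg_sub]
    ring
  have inner2 : ∀ t : ℝ, (∫ Υ : ℝ, g t * h (t - Υ) *
        Complex.exp (Complex.I * ((B * ν * Υ : ℝ):ℂ)))
      = (g t * Complex.exp (Complex.I * ((B * ν * t : ℝ):ℂ))) *
        ∫ y : ℝ, h y * Complex.exp (Complex.I * ((-(B * ν * y) : ℝ):ℂ)) := by
    intro t
    calc (∫ Υ : ℝ, g t * h (t - Υ) * Complex.exp (Complex.I * ((B * ν * Υ : ℝ):ℂ)))
        = ∫ Υ : ℝ, (fun y => g t * h y * Complex.exp (Complex.I * ((B * ν * (t - y) : ℝ):ℂ)))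
            (t - Υ) := by
          refine integral_congr_ae (Filter.Eventually.of_forall fun Υ => ?_)
          simp only
          rw [show B * ν * (t - (t - Υ)) = B * ν * Υ by ring]
      _ = ∫ y : ℝ, g t * h y * Complex.exp (Complex.I * ((B * ν * (t - y) : ℝ):ℂ)) := by
          exact integral_sub_left_eq_self
            (fun y => g t * h y * Complex.exp (Complex.I * ((B * ν * (t - y) : ℝ):ℂ))) volume t
      _ = ∫ y : ℝ, (g t * Complex.exp (Complex.I * ((B * ν * t : ℝ):ℂ))) *
            (h y * Complex.exp (Complex.I * ((-(B * ν * y) : ℝ):ℂ))) := by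
          refine integral_congr_ae (Filter.Eventually.of_forall fun y => ?_)
          show g t * h y * Complex.exp (Complex.I * ((B * ν * (t - y) : ℝ):ℂ)) =
            (g t * Complex.exp (Complex.I * ((B * ν * t : ℝ):ℂ))) *
            (h y * Complex.exp (Complex.I * ((-(B * ν * y) : ℝ):ℂ)))
          rw [← expI_mul (B * ν * t) (-(B * ν * y)) (B * ν * (t - y)) (by ring)]
          ring
      _ = _ := integral_const_mul _ _
  calc
    (∫ t : ℝ, ∫ Υ : ℝ, g (t + Υ / 2) * h (t - Υ / 2) *
        Complex.exp (Complex.I * ((B * ν * Υ : ℝ) : ℂ)))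
        = ∫ Υ : ℝ, ∫ t : ℝ, g (t + Υ / 2) * h (t - Υ / 2) *
            Complex.exp (Complex.I * ((B * ν * Υ : ℝ) : ℂ)) := integral_integral_swap hΦ
    _ = ∫ Υ : ℝ, ∫ t : ℝ, g t * h (t - Υ) *
            Complex.exp (Complex.I * ((B * ν * Υ : ℝ) : ℂ)) := by
          refine integral_congr_ae (Filter.Eventually.of_forall fun Υ => ?_)
          calc (∫ t : ℝ, g (t + Υ / 2) * h (t - Υ / 2) *
                  Complex.exp (Complex.I * ((B * ν * Υ : ℝ) : ℂ)))
              = ∫ t : ℝ, (fun s => g s * h (s - Υ) *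
                  Complex.exp (Complex.I * ((B * ν * Υ : ℝ) : ℂ))) (t + Υ / 2) := by
                refine integral_congr_ae (Filter.Eventually.of_forall fun t => ?_)
                simp only
                rw [show t + Υ / 2 - Υ = t - Υ / 2 by ring]
            _ = _ := by
                exact integral_add_right_eq_self
                  (fun s => g s * h (s - Υ) *
                    Complex.exp (Complex.I * ((B * ν * Υ : ℝ) : ℂ))) (Υ / 2)
    _ = ∫ t : ℝ, ∫ Υ : ℝ, g t * h (t - Υ) *
            Complex.exp (Complex.I * ((B * ν * Υ : ℝ) : ℂ)) := integral_integral_swap hW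
    _ = ∫ t : ℝ, (g t * Complex.exp (Complex.I * ((B * ν * t : ℝ):ℂ))) *
            ∫ y : ℝ, h y * Complex.exp (Complex.I * ((-(B * ν * y) : ℝ):ℂ)) := by
          exact integral_congr_ae (Filter.Eventually.of_forall fun t => inner2 t)
    _ = (∫ t : ℝ, g t * Complex.exp (Complex.I * ((B * ν * t : ℝ):ℂ))) *
            ∫ y : ℝ, h y * Complex.exp (Complex.I * ((-(B * ν * y) : ℝ):ℂ)) :=
          integral_mul_const _ _
    _ = (∫ x : ℝ, f x * Complex.exp (Complex.I * ((C * x ^ 2 + E * x + B * ν * x : ℝ) : ℂ))) *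
      (starRingEnd ℂ)
        (∫ y : ℝ, f y * Complex.exp (Complex.I * ((A * y ^ 2 + D * y + B * ν * y : ℝ) : ℂ))) := by
          congr 1
          · refine integral_congr_ae (Filter.Eventually.of_forall fun t => ?_)
            rw [hg_def]
            show f t * Complex.exp (Complex.I * ((C * t ^ 2 + E * t : ℝ):ℂ)) *
                Complex.exp (Complex.I * ((B * ν * t : ℝ):ℂ)) = _
            rw [mul_assoc, expI_mul (C * t ^ 2 + E * t) (B * ν * t)
              (C * t ^ 2 + E * t + B * ν * t) (by ring)]
          · rw [← integral_conj]
            refine integral_congr_ae (Filter.Eventually.of_forall fun y => ?_)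
            show h y * Complex.exp (Complex.I * ((-(B * ν * y) : ℝ):ℂ)) =
              (starRingEnd ℂ)
                (f y * Complex.exp (Complex.I * ((A * y ^ 2 + D * y + B * ν * y : ℝ):ℂ)))
            calc h y * Complex.exp (Complex.I * ((-(B * ν * y) : ℝ):ℂ))
                = (starRingEnd ℂ) (f y) *
                    Complex.exp (Complex.I * ((-(A * y ^ 2 + D * y) : ℝ):ℂ)) *
                    Complex.exp (Complex.I * ((-(B * ν * y) : ℝ):ℂ)) := by
                  rw [hh_def]
                  show (starRingEnd ℂ) (f y *
                    Complex.exp (Complex.I * ((A * y ^ 2 + D * y : ℝ):ℂ))) * _ = _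
                  rw [map_mul, conj_expI]
              _ = (starRingEnd ℂ) (f y) *
                    Complex.exp (Complex.I * ((-(A * y ^ 2 + D * y + B * ν * y) : ℝ):ℂ)) := by
                  rw [mul_assoc, expI_mul (-(A * y ^ 2 + D * y)) (-(B * ν * y))
                    (-(A * y ^ 2 + D * y + B * ν * y)) (by ring)]
              _ = _ := by rw [map_mul, conj_expI]

lemma two_pi_mul_s_conj_s (B : ℝ) (hB : 0 < B) :
    2 * (Real.pi : ℂ) * ((((B : ℂ) / (2 * (Real.pi : ℂ) * Complex.I)) ^ ((1 : ℂ) / 2)) *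
      (starRingEnd ℂ) (((B : ℂ) / (2 * (Real.pi : ℂ) * Complex.I)) ^ ((1 : ℂ) / 2)))
      = ((|B| : ℝ) : ℂ) := by
  set z : ℂ := (B : ℂ) / (2 * (Real.pi : ℂ) * Complex.I) with hz
  have habs : ‖z‖ = B / (2 * Real.pi) := by
    rw [hz, norm_div]
    simp [abs_of_pos hB,
      _root_.abs_of_nonneg Real.pi_pos.le]
  have h12 : ((1 : ℂ) / 2) = (((1:ℝ)/2 : ℝ) : ℂ) := by norm_num
  have hns : Complex.normSq (z ^ ((1 : ℂ)/2)) = B / (2 * Real.pi) := by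
    rw [← Complex.sq_norm, h12, Complex.norm_cpow_real, habs, ← Real.rpow_natCast _ 2,
      ← Real.rpow_mul (by positivity)]
    norm_num
  rw [Complex.mul_conj, hns, abs_of_pos hB]
  push_cast
  have hπ : (Real.pi : ℂ) ≠ 0 := by exact_mod_cast Real.pi_ne_zero
  field_simp

theorem AQWD_time_marginal (A B C D E : ℝ) (hB : B ≠ 0)
    (f : ℝ → ℂ) (hf1 : MemLp f 1 volume) (hf2 : MemLp f 2 volume) (ν : ℝ)
    (hint : Integrable (fun p : ℝ × ℝ =>
      chirp f C E (p.1 + p.2 / 2) * (starRingEnd ℂ) (chirp f A D (p.1 - p.2 / 2)))) :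
    (∫ t : ℝ, AQWD A B C D E f t ν) =
      (|B| : ℝ) * Complex.exp (Complex.I * (((A - C) * ν ^ 2 + (D - E) * ν : ℝ) : ℂ)) *
        (∫ x : ℝ, f x * Complex.exp (Complex.I * ((C * x ^ 2 + E * x + B * ν * x : ℝ) : ℂ))) *
        (starRingEnd ℂ)
          (∫ y : ℝ, f y * Complex.exp (Complex.I * ((A * y ^ 2 + D * y + B * ν * y : ℝ) : ℂ))) ∧
    (0 < B → (∫ t : ℝ, AQWD A B C D E f t ν) =
      2 * (Real.pi : ℂ) * QPFT A B C D E f ν * (starRingEnd ℂ) (QPFT C B A E D f ν)) := by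
  have hfi : Integrable f := memLp_one_iff_integrable.mp hf1
  have eq1 : (∫ t : ℝ, AQWD A B C D E f t ν) =
      (|B| : ℝ) * Complex.exp (Complex.I * (((A - C) * ν ^ 2 + (D - E) * ν : ℝ) : ℂ)) *
        (∫ x : ℝ, f x * Complex.exp (Complex.I * ((C * x ^ 2 + E * x + B * ν * x : ℝ) : ℂ))) *
        (starRingEnd ℂ)
          (∫ y : ℝ, f y * Complex.exp (Complex.I * ((A * y ^ 2 + D * y + B * ν * y : ℝ) : ℂ))) := by
    simp only [AQWD]
    rw [integral_const_mul, key_marginal A B C D E ν f hfi hint, ← mul_assoc]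
  refine ⟨eq1, fun hBpos => ?_⟩
  have hQ1 : QPFT A B C D E f ν =
      (((B : ℂ) / (2 * (Real.pi : ℂ) * Complex.I)) ^ ((1 : ℂ) / 2)) *
        (Complex.exp (Complex.I * ((A * ν ^ 2 + D * ν : ℝ):ℂ)) *
          ∫ x : ℝ, f x * Complex.exp (Complex.I * ((C * x ^ 2 + E * x + B * ν * x : ℝ) : ℂ))) := by
    rw [QPFT]
    congr 1
    calc (∫ t : ℝ, f t * Complex.exp (Complex.I *
          ((A * ν ^ 2 + B * t * ν + C * t ^ 2 + D * ν + E * t : ℝ) : ℂ)))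
        = ∫ t : ℝ, Complex.exp (Complex.I * ((A * ν ^ 2 + D * ν : ℝ):ℂ)) *
            (f t * Complex.exp (Complex.I * ((C * t ^ 2 + E * t + B * ν * t : ℝ):ℂ))) := by
          refine integral_congr_ae (Filter.Eventually.of_forall fun t => ?_)
          show f t * Complex.exp (Complex.I *
              ((A * ν ^ 2 + B * t * ν + C * t ^ 2 + D * ν + E * t : ℝ) : ℂ)) =
            Complex.exp (Complex.I * ((A * ν ^ 2 + D * ν : ℝ):ℂ)) *
              (f t * Complex.exp (Complex.I * ((C * t ^ 2 + E * t + B * ν * t : ℝ):ℂ)))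
          rw [← expI_mul (A * ν ^ 2 + D * ν) (C * t ^ 2 + E * t + B * ν * t)
            (A * ν ^ 2 + B * t * ν + C * t ^ 2 + D * ν + E * t) (by ring)]
          ring
      _ = _ := integral_const_mul _ _
  have hQ2 : QPFT C B A E D f ν =
      (((B : ℂ) / (2 * (Real.pi : ℂ) * Complex.I)) ^ ((1 : ℂ) / 2)) *
        (Complex.exp (Complex.I * ((C * ν ^ 2 + E * ν : ℝ):ℂ)) *
          ∫ y : ℝ, f y * Complex.exp (Complex.I * ((A * y ^ 2 + D * y + B * ν * y : ℝ) : ℂ))) := by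
    rw [QPFT]
    congr 1
    calc (∫ t : ℝ, f t * Complex.exp (Complex.I *
          ((C * ν ^ 2 + B * t * ν + A * t ^ 2 + E * ν + D * t : ℝ) : ℂ)))
        = ∫ t : ℝ, Complex.exp (Complex.I * ((C * ν ^ 2 + E * ν : ℝ):ℂ)) *
            (f t * Complex.exp (Complex.I * ((A * t ^ 2 + D * t + B * ν * t : ℝ):ℂ))) := by
          refine integral_congr_ae (Filter.Eventually.of_forall fun t => ?_)
          show f t * Complex.exp (Complex.I *
              ((C * ν ^ 2 + B * t * ν + A * t ^ 2 + E * ν + D * t : ℝ) : ℂ)) =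
            Complex.exp (Complex.I * ((C * ν ^ 2 + E * ν : ℝ):ℂ)) *
              (f t * Complex.exp (Complex.I * ((A * t ^ 2 + D * t + B * ν * t : ℝ):ℂ)))
          rw [← expI_mul (C * ν ^ 2 + E * ν) (A * t ^ 2 + D * t + B * ν * t)
            (C * ν ^ 2 + B * t * ν + A * t ^ 2 + E * ν + D * t) (by ring)]
          ring
      _ = _ := integral_const_mul _ _
  rw [eq1, hQ1, hQ2, map_mul, map_mul, conj_expI,
    ← two_pi_mul_s_conj_s B hBpos,
    ← expI_mul (A * ν ^ 2 + D * ν) (-(C * ν ^ 2 + E * ν))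
      ((A - C) * ν ^ 2 + (D - E) * ν) (by ring)]
  ring
end

section
/- (Delay-marginal property of the AQAF.) Let f ∈ L¹(ℝ) ∩ L²(ℝ), and for fixed ν ∈ ℝ assume (t,Υ) ↦ f_{C,E}(t + Υ/2)·conj(f_{A,D}(t − Υ/2))·e^{iBνt} is integrable on ℝ². Then ∫_ℝ QA_f^Λ(Υ,ν) dΥ = |B|·e^{i[(A−C)ν² + (D−E)ν]} · (∫_ℝ f(x)·e^{i(Cx² + Ex + (B/2)νx)} dx) · conj(∫_ℝ f(y)·e^{i(Ay² + Dy − (B/2)νy)} dy). -/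
open MeasureTheory Complex Real

theorem AQAF_delay_marginal (A B C D E : ℝ) (hB : B ≠ 0)
    (f : ℝ → ℂ) (hf1 : MemLp f 1 volume) (hf2 : MemLp f 2 volume) (ν : ℝ)
    (hint : Integrable (fun p : ℝ × ℝ =>
      chirp f C E (p.1 + p.2 / 2) * (starRingEnd ℂ) (chirp f A D (p.1 - p.2 / 2)) *
        Complex.exp (Complex.I * ((B * ν * p.1 : ℝ) : ℂ)))) :
    (∫ Υ : ℝ, AQAF A B C D E f Υ ν) =
      (|B| : ℝ) * Complex.exp (Complex.I * (((A - C) * ν ^ 2 + (D - E) * ν : ℝ) : ℂ)) *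
        (∫ x : ℝ, f x * Complex.exp (Complex.I *
          ((C * x ^ 2 + E * x + B / 2 * ν * x : ℝ) : ℂ))) *
        (starRingEnd ℂ) (∫ y : ℝ, f y * Complex.exp (Complex.I *
          ((A * y ^ 2 + D * y - B / 2 * ν * y : ℝ) : ℂ))) := by
  classical
  set c : ℂ := (|B| : ℝ) * Complex.exp (Complex.I * (((A - C) * ν ^ 2 + (D - E) * ν : ℝ) : ℂ))
    with hc
  -- the basic integrand
  set g : ℝ → ℝ → ℂ := fun t Υ =>
    chirp f C E (t + Υ / 2) * (starRingEnd ℂ) (chirp f A D (t - Υ / 2)) *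
      Complex.exp (Complex.I * ((B * ν * t : ℝ) : ℂ)) with hg
  have hAQAF : ∀ Υ : ℝ, AQAF A B C D E f Υ ν = c * ∫ t : ℝ, g t Υ := fun Υ => rfl
  -- the measure-preserving shear (Υ,u) ↦ (u + Υ/2, Υ)
  have hT : MeasurePreserving (fun p : ℝ × ℝ => (p.2 + p.1 / 2, p.1))
      ((volume : Measure ℝ).prod volume) ((volume : Measure ℝ).prod volume) := by
    have h1 : MeasurePreserving (fun p : ℝ × ℝ => (p.1, p.2 + p.1 / 2))
        ((volume : Measure ℝ).prod volume) ((volume : Measure ℝ).prod volume) := by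
      apply MeasurePreserving.skew_product (g := fun x y => y + x / 2)
        (MeasurePreserving.id _)
      · exact measurable_snd.add (measurable_fst.div_const 2)
      · exact Filter.Eventually.of_forall fun x => map_add_right_eq_self volume (x / 2)
    exact (Measure.measurePreserving_swap).comp h1
  -- integrability of the sheared integrand
  have hk : Integrable (fun p : ℝ × ℝ => g (p.2 + p.1 / 2) p.1)
      ((volume : Measure ℝ).prod volume) := by
    exact (hT.integrable_comp hint.aestronglyMeasurable).mpr hint
  calc
    (∫ Υ : ℝ, AQAF A B C D E f Υ ν) = c * ∫ Υ : ℝ, ∫ t : ℝ, g t Υ := by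
      simp_rw [hAQAF]; rw [integral_const_mul]
    _ = c * ∫ Υ : ℝ, ∫ u : ℝ, g (u + Υ / 2) Υ := by
      congr 1
      refine integral_congr_ae (Filter.Eventually.of_forall fun Υ => ?_)
      exact (integral_add_right_eq_self (fun t : ℝ => g t Υ) (Υ / 2)).symm
    _ = c * ∫ u : ℝ, ∫ Υ : ℝ, g (u + Υ / 2) Υ := by
      congr 1
      exact integral_integral_swap hk
    _ = c * ∫ u : ℝ, (starRingEnd ℂ) (chirp f A D u * Complex.exp (Complex.I *
          ((- (B / 2 * ν * u) : ℝ) : ℂ))) *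
        ∫ Υ : ℝ, (fun w => chirp f C E w * Complex.exp (Complex.I *
          ((B / 2 * ν * w : ℝ) : ℂ))) (u + Υ) := by
      congr 1
      refine integral_congr_ae (Filter.Eventually.of_forall fun u => ?_)
      beta_reduce
      rw [← integral_const_mul]
      refine integral_congr_ae (Filter.Eventually.of_forall fun Υ => ?_)
      have h1 : u + Υ / 2 + Υ / 2 = u + Υ := by ring
      have h2 : u + Υ / 2 - Υ / 2 = u := by ring
      simp only [hg, h1, h2]
      have hconj : (starRingEnd ℂ) (Complex.exp (Complex.I * ((- (B / 2 * ν * u) : ℝ) : ℂ))) =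
          Complex.exp (Complex.I * ((B / 2 * ν * u : ℝ) : ℂ)) := by
        rw [← Complex.exp_conj]
        congr 1
        simp only [map_mul, Complex.conj_I, Complex.conj_ofReal]
        push_cast
        ring
      have hexp : Complex.exp (Complex.I * ((B * ν * (u + Υ / 2) : ℝ) : ℂ)) =
          Complex.exp (Complex.I * ((B / 2 * ν * u : ℝ) : ℂ)) *
            Complex.exp (Complex.I * ((B / 2 * ν * (u + Υ) : ℝ) : ℂ)) := by
        rw [← Complex.exp_add]
        congr 1
        push_cast
        ring
      rw [map_mul, hconj, hexp]
      ring
    _ = c * ∫ u : ℝ, (starRingEnd ℂ) (chirp f A D u * Complex.exp (Complex.I *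
          ((- (B / 2 * ν * u) : ℝ) : ℂ))) *
        ∫ w : ℝ, chirp f C E w * Complex.exp (Complex.I * ((B / 2 * ν * w : ℝ) : ℂ)) := by
      congr 1
      refine integral_congr_ae (Filter.Eventually.of_forall fun u => ?_)
      beta_reduce
      rw [integral_add_left_eq_self (fun w : ℝ => chirp f C E w *
        Complex.exp (Complex.I * ((B / 2 * ν * w : ℝ) : ℂ))) u]
    _ = c * ((∫ w : ℝ, chirp f C E w * Complex.exp (Complex.I * ((B / 2 * ν * w : ℝ) : ℂ))) *
        ∫ u : ℝ, (starRingEnd ℂ) (chirp f A D u * Complex.exp (Complex.I *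
          ((- (B / 2 * ν * u) : ℝ) : ℂ)))) := by
      rw [integral_mul_const]
      ring
    _ = _ := by
      rw [← integral_conj]
      simp only [chirp]
      have e1 : ∀ x : ℝ, f x * Complex.exp (Complex.I * ((C * x ^ 2 + E * x : ℝ) : ℂ)) *
          Complex.exp (Complex.I * ((B / 2 * ν * x : ℝ) : ℂ)) =
          f x * Complex.exp (Complex.I * ((C * x ^ 2 + E * x + B / 2 * ν * x : ℝ) : ℂ)) := by
        intro x
        rw [mul_assoc, ← Complex.exp_add]
        push_cast; ring_nf
      have e2 : ∀ y : ℝ, f y * Complex.exp (Complex.I * ((A * y ^ 2 + D * y : ℝ) : ℂ)) *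
          Complex.exp (Complex.I * ((- (B / 2 * ν * y) : ℝ) : ℂ)) =
          f y * Complex.exp (Complex.I * ((A * y ^ 2 + D * y - B / 2 * ν * y : ℝ) : ℂ)) := by
        intro y
        rw [mul_assoc, ← Complex.exp_add]
        push_cast; ring_nf
      simp_rw [e1, e2]
      ring
end

section
/- (Inversion of the AQWD.) Let f ∈ L²(ℝ) be continuous, and fix t ∈ ℝ such that ν ↦ QW_f^Λ(t,ν) is integrable on ℝ. Then for all Υ ∈ ℝ: f_{C,E}(t + Υ/2)·conj(f_{A,D}(t − Υ/2)) = (1/(2π)) ∫_ℝ e^{−i[(A−C)ν² + (D−E)ν]} · QW_f^Λ(t,ν) · e^{−iBνΥ} dν. -/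
open MeasureTheory Complex Real
open scoped FourierTransform

lemma norm_exp_I_mul_real (r : ℝ) : ‖Complex.exp (Complex.I * (r : ℂ))‖ = 1 := by
  rw [Complex.norm_exp]
  simp [Complex.mul_re]

lemma norm_exp_neg_I_mul_real (r : ℝ) : ‖Complex.exp (-(Complex.I * (r : ℂ)))‖ = 1 := by
  rw [show -(Complex.I * (r : ℂ)) = Complex.I * ((-r : ℝ) : ℂ) by push_cast; ring]
  exact norm_exp_I_mul_real (-r)

lemma phase_cancel' (b z w u : ℂ) :
    Complex.exp (-w) * (b * Complex.exp w * z) * u = b * (z * u) := by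
  rw [Complex.exp_neg]
  field_simp [Complex.exp_ne_zero]

lemma inv_phase_cancel (b z w : ℂ) (hb : b ≠ 0) :
    b⁻¹ * (Complex.exp (-w) * (b * Complex.exp w * z)) = z := by
  rw [Complex.exp_neg]
  field_simp [Complex.exp_ne_zero]

theorem AQWD_inversion (A B C D E : ℝ) (hB : B ≠ 0)
    (f : ℝ → ℂ) (hf : MemLp f 2 volume) (hc : Continuous f) (t : ℝ)
    (hint : Integrable (fun ν : ℝ => AQWD A B C D E f t ν)) (Υ : ℝ) :
    chirp f C E (t + Υ / 2) * (starRingEnd ℂ) (chirp f A D (t - Υ / 2)) =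
      (1 / (2 * (Real.pi : ℂ))) * ∫ ν : ℝ,
        Complex.exp (-(Complex.I * (((A - C) * ν ^ 2 + (D - E) * ν : ℝ) : ℂ))) *
        AQWD A B C D E f t ν *
        Complex.exp (-(Complex.I * ((B * ν * Υ : ℝ) : ℂ))) := by
  set g : ℝ → ℂ := fun Υ => chirp f C E (t + Υ / 2) * (starRingEnd ℂ) (chirp f A D (t - Υ / 2))
    with hgdef
  have hgc : Continuous g := by
    simp only [hgdef, chirp]
    apply Continuous.mul
    · fun_prop
    · exact Complex.continuous_conj.comp (by fun_prop)
  have hnormg : ∀ v : ℝ, ‖g v‖ = ‖f (t + v / 2)‖ * ‖f (t - v / 2)‖ := by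
    intro v
    simp only [hgdef, chirp, norm_mul, RCLike.norm_conj, norm_exp_I_mul_real, mul_one]
  -- integrability of g
  have hni : Integrable (fun x => ‖f x‖ ^ 2) := hf.norm.integrable_sq
  have hplus : Integrable (fun Υ : ℝ => ‖f (t + Υ / 2)‖ ^ 2) := by
    have h1 : Integrable (fun y : ℝ => ‖f (t + y)‖ ^ 2) := hni.comp_add_left t
    have h2 := h1.comp_mul_left' (R := (2:ℝ)⁻¹) (by norm_num)
    simpa [div_eq_mul_inv, mul_comm] using h2
  have hminus : Integrable (fun Υ : ℝ => ‖f (t - Υ / 2)‖ ^ 2) := by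
    have h1 : Integrable (fun y : ℝ => ‖f (t - y)‖ ^ 2) := hni.comp_sub_left t
    have h2 := h1.comp_mul_left' (R := (2:ℝ)⁻¹) (by norm_num)
    simpa [div_eq_mul_inv, mul_comm] using h2
  have hgint : Integrable g := by
    refine ((hplus.add hminus).div_const 2).mono' hgc.aestronglyMeasurable
      (Filter.Eventually.of_forall fun v => ?_)
    rw [hnormg v]
    simp only [Pi.add_apply]
    nlinarith [sq_nonneg (‖f (t + v / 2)‖ - ‖f (t - v / 2)‖), norm_nonneg (f (t + v/2)),
      norm_nonneg (f (t - v/2))]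
  -- the inner integral of AQWD is a Fourier transform
  set c : ℝ := -B / (2 * π) with hcdef
  have hc0 : c ≠ 0 := div_ne_zero (neg_ne_zero.2 hB) (by positivity)
  have hkey : ∀ ν : ℝ,
      (∫ v : ℝ, g v * Complex.exp (Complex.I * ((B * ν * v : ℝ) : ℂ))) = 𝓕 g (c * ν) := by
    intro ν
    rw [Real.fourier_real_eq_integral_exp_smul]
    congr 1 with v
    rw [smul_eq_mul, mul_comm]
    congr 1
    have h : -2 * π * v * (c * ν) = B * ν * v := by
      rw [hcdef]; field_simp
    rw [h, mul_comm]
  have hAQWD : ∀ ν : ℝ, AQWD A B C D E f t ν =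
      (|B| : ℝ) * Complex.exp (Complex.I * (((A - C) * ν ^ 2 + (D - E) * ν : ℝ) : ℂ)) *
        𝓕 g (c * ν) := by
    intro ν
    rw [AQWD, ← hkey ν]
  -- integrability of 𝓕 g
  have hphase : ∀ ν : ℝ, Complex.exp (-(Complex.I * (((A - C) * ν ^ 2 + (D - E) * ν : ℝ) : ℂ))) *
      Complex.exp (Complex.I * (((A - C) * ν ^ 2 + (D - E) * ν : ℝ) : ℂ)) = 1 := by
    intro ν
    rw [← Complex.exp_add, neg_add_cancel, Complex.exp_zero]
  have h1 : Integrable (fun ν : ℝ => 𝓕 g (c * ν)) := by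
    have heq : (fun ν : ℝ => 𝓕 g (c * ν)) = fun ν =>
        ((|B| : ℝ) : ℂ)⁻¹ * (Complex.exp (-(Complex.I * (((A - C) * ν ^ 2 + (D - E) * ν : ℝ) : ℂ)))
          * AQWD A B C D E f t ν) := by
      funext ν
      rw [hAQWD ν]
      have hBne : ((|B| : ℝ) : ℂ) ≠ 0 := by
        simpa using abs_ne_zero.2 hB
      exact (inv_phase_cancel _ _ _ hBne).symm
    rw [heq]
    refine Integrable.const_mul ?_ _
    refine hint.bdd_mul (c := 1) ?_ (Filter.Eventually.of_forall fun ν => ?_)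
    · exact (Complex.continuous_exp.comp (by fun_prop)).aestronglyMeasurable
    · exact le_of_eq (norm_exp_neg_I_mul_real _)
  have h'f : Integrable (𝓕 g) := (integrable_comp_mul_left_iff (𝓕 g) hc0).1 h1
  have hinv : 𝓕⁻ (𝓕 g) Υ = g Υ := hgint.fourierInv_fourier_eq h'f hgc.continuousAt
  -- final computation
  set G : ℝ → ℂ := fun w => 𝓕 g w * Complex.exp (((2 * π * (w * Υ) : ℝ) : ℂ) * Complex.I)
    with hGdef
  have hpt : ∀ ν : ℝ,
      Complex.exp (-(Complex.I * (((A - C) * ν ^ 2 + (D - E) * ν : ℝ) : ℂ))) *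
        AQWD A B C D E f t ν * Complex.exp (-(Complex.I * ((B * ν * Υ : ℝ) : ℂ))) =
      ((|B| : ℝ) : ℂ) * G (c * ν) := by
    intro ν
    rw [hAQWD ν, phase_cancel']
    simp only [hGdef]
    have h2 : Complex.exp (((2 * π * ((c * ν) * Υ) : ℝ) : ℂ) * Complex.I)
        = Complex.exp (-(Complex.I * ((B * ν * Υ : ℝ) : ℂ))) := by
      congr 1
      have h3 : 2 * π * ((c * ν) * Υ) = -(B * ν * Υ) := by
        rw [hcdef]; field_simp
      rw [h3]
      push_cast
      ring
    rw [h2]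
  have hInt : (∫ ν : ℝ, Complex.exp (-(Complex.I * (((A - C) * ν ^ 2 + (D - E) * ν : ℝ) : ℂ))) *
        AQWD A B C D E f t ν * Complex.exp (-(Complex.I * ((B * ν * Υ : ℝ) : ℂ))))
      = ((|B| : ℝ) : ℂ) * ∫ ν : ℝ, G (c * ν) := by
    simp only [hpt]
    rw [MeasureTheory.integral_const_mul]
  have hsub : (∫ ν : ℝ, G (c * ν)) = |c⁻¹| • ∫ w : ℝ, G w :=
    MeasureTheory.Measure.integral_comp_mul_left G c
  have hG : (∫ w : ℝ, G w) = g Υ := by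
    rw [← hinv, Real.fourierInv_eq']
    congr 1 with v
    rw [smul_eq_mul, mul_comm]
    simp only [hGdef]
    congr 2
    simp only [RCLike.inner_apply, conj_trivial]; push_cast; ring
  have habs : |B| ≠ 0 := abs_ne_zero.2 hB
  have hconst : |B| * |c⁻¹| = 2 * π := by
    rw [hcdef, abs_inv, abs_div, abs_neg, abs_of_pos (by positivity : (0:ℝ) < 2 * π)]
    field_simp
  have hBc : ((|B| : ℝ) : ℂ) * ((|c⁻¹| : ℝ) : ℂ) = 2 * (π : ℂ) := by
    rw [← Complex.ofReal_mul, hconst]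
    push_cast
    ring
  rw [hInt, hsub, Complex.real_smul, hG]
  have h2π : (2 * (π : ℂ)) ≠ 0 := by
    simp [Real.pi_ne_zero]
  show g Υ = 1 / (2 * (π : ℂ)) * (((|B| : ℝ) : ℂ) * (((|c⁻¹| : ℝ) : ℂ) * g Υ))
  rw [← mul_assoc (((|B| : ℝ)) : ℂ), hBc, ← mul_assoc, one_div, inv_mul_cancel₀ h2π, one_mul]
end

section
/- (Recovery of the instantaneous energy from the AQWD.) Let f ∈ L²(ℝ) be continuous, and fix t ∈ ℝ such that ν ↦ QW_f^Λ(t,ν) is integrable on ℝ. Then |f(t)|² = (1/(2π)) ∫_ℝ e^{i[(A−C)(t² − ν²) + (D−E)(t − ν)]} · QW_f^Λ(t,ν) dν. -/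
open MeasureTheory Complex Real
open FourierTransform

private lemma memLp_chirp (f : ℝ → ℂ) (hf : MemLp f 2 volume) (p q : ℝ) :
    MemLp (chirp f p q) 2 volume := by
  have hφ : MemLp (fun x : ℝ => Complex.exp (Complex.I * ((p * x ^ 2 + q * x : ℝ) : ℂ))) ⊤ volume := by
    apply memLp_top_of_bound (C := 1)
    · exact (Continuous.aestronglyMeasurable (by continuity))
    · filter_upwards with x
      rw [mul_comm, Complex.norm_exp_ofReal_mul_I]
  have := hf.smul (r := 2) hφ
  apply this.ae_eq
  filter_upwards with x
  simp [chirp, smul_eq_mul, mul_comm]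

private lemma memLp_affine (F : ℝ → ℂ) (hF : MemLp F 2 volume) (a b : ℝ) (ha : a ≠ 0) :
    MemLp (fun x => F (a * x + b)) 2 volume := by
  have hmap : Measure.map (fun x : ℝ => a * x + b) volume
      = ENNReal.ofReal |a⁻¹| • volume := by
    have : (fun x : ℝ => a * x + b) = (fun y : ℝ => y + b) ∘ (fun x : ℝ => a * x) := rfl
    rw [this, ← Measure.map_map (measurable_add_const b) (measurable_const_mul a),
      Real.map_volume_mul_left ha, Measure.map_smul,
      map_add_right_eq_self volume b]
  have : MemLp F 2 (Measure.map (fun x : ℝ => a * x + b) volume) := by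
    rw [hmap]
    exact hF.smul_measure ENNReal.ofReal_ne_top
  exact this.comp_of_map ((measurable_const_mul a).add_const b).aemeasurable

private lemma integrable_mul_conj (F G : ℝ → ℂ) (hF : MemLp F 2 volume)
    (hG : MemLp G 2 volume) :
    Integrable (fun x => F x * (starRingEnd ℂ) (G x)) volume := by
  have hG' : MemLp (fun x => (starRingEnd ℂ) (G x)) 2 volume := by
    constructor
    · exact (Complex.continuous_conj.comp_aestronglyMeasurable hG.1)
    · have : eLpNorm (fun x => (starRingEnd ℂ) (G x)) 2 volume = eLpNorm G 2 volume := by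
        apply eLpNorm_congr_norm_ae
        filter_upwards with x using by simp
      rw [this]; exact hG.2
  have := hF.smul (φ := fun x => (starRingEnd ℂ) (G x)) hG' (r := 1)
  rw [memLp_one_iff_integrable] at this
  simpa [smul_eq_mul, mul_comm, Pi.mul_def] using this

private lemma fourier_key (B : ℝ) (hB : B ≠ 0) (g : ℝ → ℂ) (hg : Integrable g volume)
    (hgc : Continuous g) (H : ℝ → ℂ)
    (hHdef : ∀ ν, H ν = ∫ Υ : ℝ, g Υ * Complex.exp (Complex.I * ((B * ν * Υ : ℝ) : ℂ)))
    (hH : Integrable H volume) :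
    ∫ ν : ℝ, H ν = ((2 * π / |B| : ℝ) : ℂ) * g 0 := by
  have hπ : (π : ℝ) ≠ 0 := Real.pi_ne_zero
  have hπC : (π : ℂ) ≠ 0 := by exact_mod_cast hπ
  have hHg : ∀ ν, H ν = 𝓕 g ((-B / (2 * π)) * ν) := by
    intro ν
    rw [hHdef, Real.fourier_real_eq_integral_exp_smul]
    congr 1
    ext v
    rw [smul_eq_mul, mul_comm ((g v)) _, mul_comm Complex.I _]
    congr 2
    push_cast
    field_simp
  have hc : (-B / (2 * π)) ≠ 0 := by
    simp [hB, hπ]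
  have hFg : ∀ ξ, 𝓕 g ξ = H ((-B / (2 * π))⁻¹ * ξ) := by
    intro ξ
    rw [hHg, mul_inv_cancel_left₀ hc]
  have hFgInt : Integrable (𝓕 g) volume := by
    have : Integrable (fun ξ => H ((-B / (2 * π))⁻¹ * ξ)) volume :=
      hH.comp_mul_left' (inv_ne_zero hc)
    exact this.congr (by filter_upwards with ξ using (hFg ξ).symm)
  have hinv : ∫ ξ : ℝ, 𝓕 g ξ = g 0 := by
    have := hg.fourierInv_fourier_eq hFgInt (hgc.continuousAt (x := 0))
    rw [← this, Real.fourierInv_eq]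
    simp
  calc ∫ ν : ℝ, H ν = ∫ ν : ℝ, 𝓕 g ((-B / (2 * π)) * ν) := by
        congr 1; ext ν; exact hHg ν
    _ = |(-B / (2 * π))⁻¹| • ∫ ξ : ℝ, 𝓕 g ξ := MeasureTheory.Measure.integral_comp_mul_left _ _
    _ = ((2 * π / |B| : ℝ) : ℂ) * g 0 := by
        rw [hinv, Complex.real_smul]
        congr 2
        rw [abs_inv, abs_div, abs_neg, abs_of_pos (by positivity : (0:ℝ) < 2 * π)]
        field_simp

theorem AQWD_instantaneous_energy (A B C D E : ℝ) (hB : B ≠ 0)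
    (f : ℝ → ℂ) (hf : MemLp f 2 volume) (hc : Continuous f) (t : ℝ)
    (hint : Integrable (fun ν : ℝ => AQWD A B C D E f t ν)) :
    ((‖f t‖ ^ 2 : ℝ) : ℂ) =
      (1 / (2 * (Real.pi : ℂ))) * ∫ ν : ℝ,
        Complex.exp (Complex.I * (((A - C) * (t ^ 2 - ν ^ 2) + (D - E) * (t - ν) : ℝ) : ℂ)) *
        AQWD A B C D E f t ν := by
  have hπ : (π : ℝ) ≠ 0 := Real.pi_ne_zero
  have hπC : (π : ℂ) ≠ 0 := by exact_mod_cast hπ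
  have hBabs : (|B| : ℝ) ≠ 0 := abs_ne_zero.2 hB
  have hBC : ((|B| : ℝ) : ℂ) ≠ 0 := by exact_mod_cast hBabs
  set F := chirp f C E with hF_def
  set G := chirp f A D with hG_def
  have hFm : MemLp F 2 volume := memLp_chirp f hf C E
  have hGm : MemLp G 2 volume := memLp_chirp f hf A D
  set g : ℝ → ℂ := fun Υ => F (t + Υ / 2) * (starRingEnd ℂ) (G (t - Υ / 2)) with hg_def
  have hF2 : MemLp (fun Υ : ℝ => F (t + Υ / 2)) 2 volume := by
    have := memLp_affine F hFm (1/2) t (by norm_num)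
    apply this.ae_eq
    filter_upwards with x
    congr 1
    ring
  have hG2 : MemLp (fun Υ : ℝ => G (t - Υ / 2)) 2 volume := by
    have := memLp_affine G hGm (-(1/2)) t (by norm_num)
    apply this.ae_eq
    filter_upwards with x
    congr 1
    ring
  have hgInt : Integrable g volume := integrable_mul_conj _ _ hF2 hG2
  have hFc : Continuous F := by
    rw [hF_def]; unfold chirp; continuity
  have hGc : Continuous G := by
    rw [hG_def]; unfold chirp; continuity
  have hgc : Continuous g := by
    apply Continuous.mul
    · exact hFc.comp (by continuity)
    · exact Complex.continuous_conj.comp (hGc.comp (by continuity))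
  set H : ℝ → ℂ := fun ν => ∫ Υ : ℝ, g Υ * Complex.exp (Complex.I * ((B * ν * Υ : ℝ) : ℂ))
    with hH_def
  have hAQWD : ∀ ν, AQWD A B C D E f t ν = ((|B| : ℝ) : ℂ) *
      Complex.exp (Complex.I * (((A - C) * ν ^ 2 + (D - E) * ν : ℝ) : ℂ)) * H ν :=
    fun ν => rfl
  have hHint : Integrable H volume := by
    have h1 : Integrable (fun ν : ℝ => (((|B| : ℝ) : ℂ))⁻¹ *
        Complex.exp (-(Complex.I * (((A - C) * ν ^ 2 + (D - E) * ν : ℝ) : ℂ))) *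
        AQWD A B C D E f t ν) volume := by
      apply hint.bdd_mul (c := (|B|)⁻¹)
      · apply Continuous.aestronglyMeasurable
        apply Continuous.mul continuous_const
        apply Complex.continuous_exp.comp
        apply Continuous.neg
        apply Continuous.mul continuous_const
        exact Complex.continuous_ofReal.comp (by fun_prop)
      · refine Filter.Eventually.of_forall (fun ν => ?_)
        rw [norm_mul]
        have h2 : ‖Complex.exp (-(Complex.I * (((A - C) * ν ^ 2 + (D - E) * ν : ℝ) : ℂ)))‖ = 1 := by
          rw [
            show -(Complex.I * (((A - C) * ν ^ 2 + (D - E) * ν : ℝ) : ℂ))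
              = ((-((A - C) * ν ^ 2 + (D - E) * ν) : ℝ) : ℂ) * Complex.I from by push_cast; ring,
            Complex.norm_exp_ofReal_mul_I]
        rw [h2]
        simp
    apply h1.congr
    filter_upwards with ν
    rw [hAQWD ν]
    rw [show (((|B| : ℝ) : ℂ))⁻¹ *
        Complex.exp (-(Complex.I * (((A - C) * ν ^ 2 + (D - E) * ν : ℝ) : ℂ))) *
        (((|B| : ℝ) : ℂ) * Complex.exp (Complex.I * (((A - C) * ν ^ 2 + (D - E) * ν : ℝ) : ℂ)) * H ν)
      = (((|B| : ℝ) : ℂ))⁻¹ * ((|B| : ℝ) : ℂ) *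
        (Complex.exp (-(Complex.I * (((A - C) * ν ^ 2 + (D - E) * ν : ℝ) : ℂ))) *
         Complex.exp (Complex.I * (((A - C) * ν ^ 2 + (D - E) * ν : ℝ) : ℂ))) * H ν from by ring,
      ← Complex.exp_add, inv_mul_cancel₀ hBC]
    simp
  have key : ∫ ν : ℝ, H ν = ((2 * π / |B| : ℝ) : ℂ) * g 0 :=
    fourier_key B hB g hgInt hgc H (fun ν => rfl) hHint
  have hθ : ∀ ν : ℝ,
      Complex.exp (Complex.I * (((A - C) * (t ^ 2 - ν ^ 2) + (D - E) * (t - ν) : ℝ) : ℂ)) *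
        AQWD A B C D E f t ν
      = ((|B| : ℝ) : ℂ) *
          Complex.exp (Complex.I * (((A - C) * t ^ 2 + (D - E) * t : ℝ) : ℂ)) * H ν := by
    intro ν
    rw [hAQWD ν]
    rw [show Complex.exp (Complex.I * (((A - C) * (t ^ 2 - ν ^ 2) + (D - E) * (t - ν) : ℝ) : ℂ)) *
        (((|B| : ℝ) : ℂ) * Complex.exp (Complex.I * (((A - C) * ν ^ 2 + (D - E) * ν : ℝ) : ℂ)) * H ν)
      = ((|B| : ℝ) : ℂ) *
        (Complex.exp (Complex.I * (((A - C) * (t ^ 2 - ν ^ 2) + (D - E) * (t - ν) : ℝ) : ℂ)) *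
         Complex.exp (Complex.I * (((A - C) * ν ^ 2 + (D - E) * ν : ℝ) : ℂ))) * H ν from by ring,
      ← Complex.exp_add]
    congr 3
    push_cast
    ring
  have hconj : ∀ r : ℝ, (starRingEnd ℂ) (Complex.exp (Complex.I * (r : ℂ)))
      = Complex.exp (-(Complex.I * (r : ℂ))) := by
    intro r
    rw [← Complex.exp_conj, map_mul, Complex.conj_I, Complex.conj_ofReal, neg_mul]
  have hg0 : g 0 = ((‖f t‖ ^ 2 : ℝ) : ℂ) *
      Complex.exp (-(Complex.I * (((A - C) * t ^ 2 + (D - E) * t : ℝ) : ℂ))) := by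
    have hgt : g 0 = F t * (starRingEnd ℂ) (G t) := by
      rw [hg_def]; norm_num
    rw [hgt, hF_def, hG_def]
    show f t * Complex.exp (Complex.I * ((C * t ^ 2 + E * t : ℝ) : ℂ)) *
        (starRingEnd ℂ) (f t * Complex.exp (Complex.I * ((A * t ^ 2 + D * t : ℝ) : ℂ))) = _
    rw [map_mul, hconj]
    rw [show f t * Complex.exp (Complex.I * ((C * t ^ 2 + E * t : ℝ) : ℂ)) *
        ((starRingEnd ℂ) (f t) * Complex.exp (-(Complex.I * ((A * t ^ 2 + D * t : ℝ) : ℂ))))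
      = (f t * (starRingEnd ℂ) (f t)) *
        (Complex.exp (Complex.I * ((C * t ^ 2 + E * t : ℝ) : ℂ)) *
         Complex.exp (-(Complex.I * ((A * t ^ 2 + D * t : ℝ) : ℂ)))) from by ring,
      ← Complex.exp_add, Complex.mul_conj]
    congr 2
    · rw [← Complex.sq_norm]
    · push_cast
      ring
  rw [funext hθ, MeasureTheory.integral_const_mul, key, hg0]
  have h1 : Complex.exp (Complex.I * (((A - C) * t ^ 2 + (D - E) * t : ℝ) : ℂ)) *
      Complex.exp (-(Complex.I * (((A - C) * t ^ 2 + (D - E) * t : ℝ) : ℂ))) = 1 := by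
    rw [← Complex.exp_add]
    simp
  rw [show (1 / (2 * (π : ℂ))) * (((|B| : ℝ) : ℂ) *
        Complex.exp (Complex.I * (((A - C) * t ^ 2 + (D - E) * t : ℝ) : ℂ)) *
        (((2 * π / |B| : ℝ) : ℂ) * (((‖f t‖ ^ 2 : ℝ) : ℂ) *
          Complex.exp (-(Complex.I * (((A - C) * t ^ 2 + (D - E) * t : ℝ) : ℂ))))))
      = ((1 / (2 * (π : ℂ))) * ((|B| : ℝ) : ℂ) * ((2 * π / |B| : ℝ) : ℂ)) *
        (Complex.exp (Complex.I * (((A - C) * t ^ 2 + (D - E) * t : ℝ) : ℂ)) *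
         Complex.exp (-(Complex.I * (((A - C) * t ^ 2 + (D - E) * t : ℝ) : ℂ)))) *
        ((‖f t‖ ^ 2 : ℝ) : ℂ) from by ring,
    h1, mul_one]
  rw [show (1 / (2 * (π : ℂ))) * ((|B| : ℝ) : ℂ) * ((2 * π / |B| : ℝ) : ℂ) = 1 from by
    push_cast
    field_simp, one_mul]
end

section
/- (AQWD of a single-component LFM signal, matched-parameter case.) Let f(t) = A₀·e^{i(ν₀t + ξ₀t²)} with A₀ ∈ ℂ and ν₀, ξ₀ ∈ ℝ, let T > 0, and suppose A = C in Λ = (A,B,C,D,E), B ≠ 0. Then for all t, ν ∈ ℝ the truncated AQWD satisfies |B|·e^{i[(A−C)ν² + (D−E)ν]} ∫_{−T/2}^{T/2} f_{C,E}(t + Υ/2)·conj(f_{A,D}(t − Υ/2))·e^{iBνΥ} dΥ = |A₀|²·T·|B|·e^{i(D−E)(ν−t)}·sinc((T/2)·[(2ξ₀ + 2A)t + Bν + ν₀ + (D+E)/2]), where sinc(x) = sin(x)/x with sinc(0) = 1. -/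
open MeasureTheory Complex Real

/-- The unnormalized sinc function: `sin x / x` with value `1` at `0`. -/
noncomputable def sinc (x : ℝ) : ℝ := if x = 0 then 1 else Real.sin x / x

lemma integral_exp_I_sinc (L ω : ℝ) :
    (∫ x in (-L)..L, Complex.exp (Complex.I * ((ω * x : ℝ) : ℂ))) =
      ((2 * L : ℝ) : ℂ) * ((_root_.sinc (L * ω) : ℝ) : ℂ) := by
  by_cases hω : ω = 0
  · simp [hω, _root_.sinc]; push_cast; ring
  · by_cases hL : L = 0
    · simp [hL]
    have hc : (Complex.I * (ω : ℂ)) ≠ 0 := by simp [Complex.I_ne_zero, hω]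
    have h1 : (∫ x in (-L)..L, Complex.exp (Complex.I * ((ω * x : ℝ) : ℂ)))
        = ∫ x in (-L)..L, Complex.exp ((Complex.I * ω) * x) := by
      apply intervalIntegral.integral_congr
      intro x _; push_cast; ring_nf
    rw [h1, integral_exp_mul_complex hc]
    have hsin : Complex.exp (Complex.I * ω * L) - Complex.exp (Complex.I * ω * (-L))
        = 2 * Complex.I * Complex.sin ((ω * L : ℝ) : ℂ) := by
      rw [Complex.sin]
      push_cast
      ring_nf
      rw [Complex.exp_neg]
      field_simp
      ring_nf
      rw [Complex.I_sq]; ring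
    push_cast at hsin ⊢
    rw [hsin, show ((ω:ℂ) * L) = ((ω*L:ℝ):ℂ) by push_cast; ring,
      ← Complex.ofReal_sin, _root_.sinc, if_neg (mul_ne_zero hL hω)]
    have hωc : (ω : ℂ) ≠ 0 := by exact_mod_cast hω
    have hLc : (L : ℂ) ≠ 0 := by exact_mod_cast hL
    push_cast
    rw [show ((ω:ℂ)*L) = ((L:ℂ)*ω) from mul_comm _ _]
    field_simp



theorem AQWD_LFM_single_component (A B C D E : ℝ) (hB : B ≠ 0) (hAC : A = C)
    (A₀ : ℂ) (ν₀ ξ₀ : ℝ) (T : ℝ) (hT : 0 < T) (t ν : ℝ)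
    (f : ℝ → ℂ)
    (hf : f = fun s => A₀ * Complex.exp (Complex.I * ((ν₀ * s + ξ₀ * s ^ 2 : ℝ) : ℂ))) :
    (|B| : ℝ) * Complex.exp (Complex.I * (((A - C) * ν ^ 2 + (D - E) * ν : ℝ) : ℂ)) *
      (∫ Υ in (-(T / 2))..(T / 2),
        chirp f C E (t + Υ / 2) * (starRingEnd ℂ) (chirp f A D (t - Υ / 2)) *
          Complex.exp (Complex.I * ((B * ν * Υ : ℝ) : ℂ))) =
      ((‖A₀‖ ^ 2 : ℝ) : ℂ) * (T : ℂ) * (|B| : ℝ) *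
        Complex.exp (Complex.I * (((D - E) * (ν - t) : ℝ) : ℂ)) *
        ((_root_.sinc (T / 2 * ((2 * ξ₀ + 2 * A) * t + B * ν + ν₀ + (D + E) / 2)) : ℝ) : ℂ) := by
  have hpt : ∀ Υ ∈ Set.uIcc (-(T/2)) (T/2),
      chirp f C E (t + Υ / 2) * (starRingEnd ℂ) (chirp f A D (t - Υ / 2)) *
          Complex.exp (Complex.I * ((B * ν * Υ : ℝ) : ℂ)) =
      ((‖A₀‖ ^ 2 : ℝ) : ℂ) * Complex.exp (Complex.I * (((E - D) * t : ℝ) : ℂ)) *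
        Complex.exp (Complex.I * ((((2 * ξ₀ + 2 * A) * t + B * ν + ν₀ + (D + E) / 2) * Υ : ℝ) : ℂ)) := by
    intro Υ _
    subst hf hAC
    simp only [chirp, map_mul, ← Complex.exp_conj, map_add, Complex.conj_ofReal, Complex.conj_I]
    have merge : ∀ x1 x2 x3 x4 x5 : ℂ, A₀ * Complex.exp x1 * Complex.exp x2 *
        ((starRingEnd ℂ) A₀ * Complex.exp x3 * Complex.exp x4) * Complex.exp x5 =
        (A₀ * (starRingEnd ℂ) A₀) * Complex.exp (x1+x2+x3+x4+x5) := by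
      intros; simp [Complex.exp_add]; ring
    have merge2 : ∀ c x y : ℂ, c * Complex.exp x * Complex.exp y = c * Complex.exp (x+y) := by
      intros; rw [mul_assoc, ← Complex.exp_add]
    rw [merge, merge2, Complex.mul_conj]
    congr 1
    · rw [← Complex.sq_norm]
    · push_cast; ring
  rw [intervalIntegral.integral_congr hpt]
  rw [intervalIntegral.integral_const_mul, integral_exp_I_sinc (T/2)]
  rw [show ((E - D) * t : ℝ) = -((D - E) * t) by ring, Complex.ofReal_neg,
    show Complex.I * (-((D - E) * t : ℝ) : ℂ) = -(Complex.I * ((D - E) * t : ℝ)) by ring,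
    Complex.exp_neg]
  have h1 : Complex.exp (Complex.I * (((D - E) * (ν - t) : ℝ) : ℂ)) =
      Complex.exp (Complex.I * (((A - C) * ν ^ 2 + (D - E) * ν : ℝ) : ℂ)) /
        Complex.exp (Complex.I * (((D - E) * t : ℝ) : ℂ)) := by
    rw [eq_div_iff (Complex.exp_ne_zero _), ← Complex.exp_add]
    congr 1
    subst hAC; push_cast; ring
  rw [h1]
  have h2 := Complex.exp_ne_zero (Complex.I * (((D - E) * t : ℝ) : ℂ))
  field_simp
end

section
/- (AQAF of a single-component LFM signal, matched-parameter case.) Let f(t) = A₀·e^{i(ν₀t + ξ₀t²)} with A₀ ∈ ℂ and ν₀, ξ₀ ∈ ℝ, let T > 0, and suppose A = C in Λ = (A,B,C,D,E), B ≠ 0. Then for all Υ, ν ∈ ℝ the truncated AQAF satisfies |B|·e^{i[(A−C)ν² + (D−E)ν]} ∫_{−T/2}^{T/2} f_{C,E}(t + Υ/2)·conj(f_{A,D}(t − Υ/2))·e^{iBνt} dt = |A₀|²·T·|B|·e^{i(D−E)ν}·e^{i[ν₀ + (D+E)/2]Υ}·sinc((T/2)·[(2ξ₀ + 2A)Υ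 + Bν + E − D]), where sinc(x) = sin(x)/x with sinc(0) = 1. -/
open MeasureTheory Complex Real

lemma exp_interval_integral (k T : ℝ) (hT : 0 < T) :
    (∫ t in (-(T/2))..(T/2), Complex.exp (Complex.I * ((k*t : ℝ) : ℂ))) =
      (T : ℂ) * ((_root_.sinc (T/2*k) : ℝ) : ℂ) := by
  by_cases hk : k = 0
  · simp [hk, _root_.sinc, mul_comm]
  · have hc : Complex.I * (k:ℂ) ≠ 0 := by
      simp [Complex.ext_iff, hk]
    have h1 : ∀ t : ℝ, Complex.I * ((k*t : ℝ) : ℂ) = (Complex.I * (k:ℂ)) * (t:ℂ) := by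
      intro t; push_cast; ring
    simp only [h1]
    rw [integral_exp_mul_complex hc]
    have hT2k : T/2*k ≠ 0 := mul_ne_zero (by positivity) hk
    rw [_root_.sinc, if_neg hT2k]
    have hsin : Complex.exp (Complex.I*(k:ℂ) * ((T/2 : ℝ):ℂ)) -
        Complex.exp (Complex.I*(k:ℂ) * ((-(T/2) : ℝ):ℂ)) =
        2 * Complex.I * Complex.sin ((T/2*k : ℝ):ℂ) := by
      have e1 : Complex.I*(k:ℂ) * ((T/2 : ℝ):ℂ) = ((T/2*k : ℝ):ℂ) * Complex.I := by
        push_cast; ring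
      have e2 : Complex.I*(k:ℂ) * ((-(T/2) : ℝ):ℂ) = (-((T/2*k : ℝ):ℂ)) * Complex.I := by
        push_cast; ring
      rw [e1, e2, Complex.exp_mul_I, Complex.exp_mul_I]
      simp [Complex.cos_neg, Complex.sin_neg]
      ring
    rw [hsin, ← Complex.ofReal_sin]
    have hkc : (k:ℂ) ≠ 0 := Complex.ofReal_ne_zero.mpr hk
    have hTc : (T:ℂ) ≠ 0 := Complex.ofReal_ne_zero.mpr hT.ne'
    push_cast
    field_simp

theorem AQAF_LFM_single_component (A B C D E : ℝ) (hB : B ≠ 0) (hAC : A = C)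
    (A₀ : ℂ) (ν₀ ξ₀ : ℝ) (T : ℝ) (hT : 0 < T) (Υ ν : ℝ)
    (f : ℝ → ℂ)
    (hf : f = fun s => A₀ * Complex.exp (Complex.I * ((ν₀ * s + ξ₀ * s ^ 2 : ℝ) : ℂ))) :
    (|B| : ℝ) * Complex.exp (Complex.I * (((A - C) * ν ^ 2 + (D - E) * ν : ℝ) : ℂ)) *
      (∫ t in (-(T / 2))..(T / 2),
        chirp f C E (t + Υ / 2) * (starRingEnd ℂ) (chirp f A D (t - Υ / 2)) *
          Complex.exp (Complex.I * ((B * ν * t : ℝ) : ℂ))) =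
      ((‖A₀‖ ^ 2 : ℝ) : ℂ) * (T : ℂ) * (|B| : ℝ) *
        Complex.exp (Complex.I * (((D - E) * ν : ℝ) : ℂ)) *
        Complex.exp (Complex.I * (((ν₀ + (D + E) / 2) * Υ : ℝ) : ℂ)) *
        ((_root_.sinc (T / 2 * ((2 * ξ₀ + 2 * A) * Υ + B * ν + E - D)) : ℝ) : ℂ) := by
  have hpt : ∀ t : ℝ, chirp f C E (t + Υ / 2) * (starRingEnd ℂ) (chirp f A D (t - Υ / 2)) *
          Complex.exp (Complex.I * ((B * ν * t : ℝ) : ℂ)) =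
      ((‖A₀‖ ^ 2 : ℝ) : ℂ) *
        Complex.exp (Complex.I * (((ν₀ + (D + E) / 2) * Υ : ℝ) : ℂ)) *
        Complex.exp (Complex.I * ((((2 * ξ₀ + 2 * A) * Υ + B * ν + E - D) * t : ℝ) : ℂ)) := by
    subst hf hAC
    intro t
    have key : ∀ (a b x y z w u : ℂ), a * Complex.exp x * Complex.exp y *
        (b * Complex.exp z * Complex.exp w) * Complex.exp u =
        a * b * Complex.exp (x + y + z + w + u) := by
      intros; simp only [Complex.exp_add]; ring
    have key2 : ∀ (c u v : ℂ), c * Complex.exp u * Complex.exp v = c * Complex.exp (u + v) := by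
      intros; rw [Complex.exp_add]; ring
    simp only [chirp, map_mul, ← Complex.exp_conj, Complex.conj_I, Complex.conj_ofReal, neg_mul]
    rw [key, key2, show ((‖A₀‖ ^ 2 : ℝ) : ℂ) = A₀ * (starRingEnd ℂ) A₀ by
      rw [Complex.mul_conj, Complex.sq_norm]]
    congr 1
    push_cast
    ring
  simp only [hpt]
  rw [intervalIntegral.integral_const_mul,
    exp_interval_integral ((2 * ξ₀ + 2 * A) * Υ + B * ν + E - D) T hT]
  rw [show (A - C) * ν ^ 2 + (D - E) * ν = (D - E) * ν by rw [hAC]; ring]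
  ring
end
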